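/- arXiv:1806.00720 — 8 statements merged into one kernel-verified Lean document; each statement's English description precedes it below -/
import Mathlib

section
/- Let p > t > 0 and μ be real numbers (true precision p = σ_η^{-2} and prior precision t = σ_{**}^{-2}). Suppose (M_n) is a sequence of positive integers with M_n → ∞, and for each n there are positive reals s_{n,1},…,s_{n,M_n} and reals m_{n,1},…,m_{n,M_n} such that max_{1≤i≤M_n} |s_{n,i} − p| → 0 and max_{1≤i≤M_n} |m_{n,i} − μ| → 0. Then the BCM aggregated precision P_n = Σ_{i=1}^{M_n} (s_{n,i} − t) + t tends to ∞ (so the BCM prediction variance 1/P_n → 0), while the BCM aggregated mean P_n^{-1} Σ_{i=1}^{M_n} s_{n,i} m_{n,i} converges to a·μ where a = p/(p − t) > 1 (for μ ≠ 0 the mean is inconsistent). -/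
open Filter Topology Finset

private lemma div_div_aux (a b c : ℝ) (hc : c ≠ 0) : a / b = (a / c) / (b / c) := by
  rcases eq_or_ne b 0 with hb | hb
  · simp [hb]
  · field_simp

/-- BCM under random partition: the aggregated precision `Σ (s_i − t) + t` tends to infinity
(so the BCM variance tends to 0), while the BCM aggregated mean converges to `a·μ` with
`a = p/(p − t) > 1`. -/
theorem bcm_random_partition_inconsistency
    (p t μ : ℝ) (ht : 0 < t) (htp : t < p)
    (M : ℕ → ℕ) (hMpos : ∀ n, 0 < M n)
    (hM : Tendsto (fun n => (M n : ℝ)) atTop atTop)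
    (s m : ℕ → ℕ → ℝ)
    (hspos : ∀ n, ∀ i ∈ Finset.Icc 1 (M n), 0 < s n i)
    (hs : ∀ ε > (0 : ℝ), ∃ N : ℕ, ∀ n ≥ N, ∀ i ∈ Finset.Icc 1 (M n), |s n i - p| < ε)
    (hm : ∀ ε > (0 : ℝ), ∃ N : ℕ, ∀ n ≥ N, ∀ i ∈ Finset.Icc 1 (M n), |m n i - μ| < ε) :
    1 < p / (p - t) ∧
    Tendsto (fun n => (∑ i ∈ Finset.Icc 1 (M n), (s n i - t)) + t) atTop atTop ∧
    Tendsto (fun n => 1 / ((∑ i ∈ Finset.Icc 1 (M n), (s n i - t)) + t)) atTop (𝓝 0) ∧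
    Tendsto (fun n => (∑ i ∈ Finset.Icc 1 (M n), s n i * m n i) /
      ((∑ i ∈ Finset.Icc 1 (M n), (s n i - t)) + t)) atTop (𝓝 (p / (p - t) * μ)) := by
  have hpt : (0:ℝ) < p - t := by linarith
  have hp : (0:ℝ) < p := lt_trans ht htp
  have hcard : ∀ n, (Finset.Icc 1 (M n)).card = M n := by
    intro n; simp [Nat.card_Icc]
  have hMc : ∀ n, (0:ℝ) < (M n : ℝ) := fun n => by exact_mod_cast hMpos n
  -- part 1
  have h1 : 1 < p / (p - t) := by
    rw [lt_div_iff₀ hpt]; linarith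
  -- P_n tends to atTop
  have hP : Tendsto (fun n => (∑ i ∈ Finset.Icc 1 (M n), (s n i - t)) + t) atTop atTop := by
    obtain ⟨N, hN⟩ := hs ((p - t)/2) (by linarith)
    refine tendsto_atTop_mono' atTop ?_ (hM.atTop_mul_const (show (0:ℝ) < (p - t)/2 by linarith))
    filter_upwards [eventually_ge_atTop N] with n hn
    have hb : ∀ i ∈ Finset.Icc 1 (M n), (p - t)/2 ≤ s n i - t := by
      intro i hi
      have := abs_lt.mp (hN n hn i hi)
      linarith [this.1]
    calc (M n : ℝ) * ((p - t)/2) = (Finset.Icc 1 (M n)).card • ((p - t)/2) := by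
          rw [hcard n, nsmul_eq_mul]
      _ ≤ ∑ i ∈ Finset.Icc 1 (M n), (s n i - t) := Finset.card_nsmul_le_sum _ _ _ hb
      _ ≤ _ := by linarith
  -- g : P_n / M_n → p - t
  have hg : Tendsto (fun n => ((∑ i ∈ Finset.Icc 1 (M n), (s n i - t)) + t) / (M n : ℝ))
      atTop (𝓝 (p - t)) := by
    rw [Metric.tendsto_atTop]
    intro ε hε
    obtain ⟨N1, hN1⟩ := hs (ε/4) (by linarith)
    obtain ⟨N2, hN2⟩ := eventually_atTop.mp (hM.eventually_ge_atTop (2*t/ε))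
    refine ⟨max N1 N2, fun n hn => ?_⟩
    have hn1 : n ≥ N1 := le_trans (le_max_left _ _) hn
    have hn2 : n ≥ N2 := le_trans (le_max_right _ _) hn
    have hc := hMc n
    have hA : |∑ i ∈ Finset.Icc 1 (M n), (s n i - p)| ≤ (M n : ℝ) * (ε/4) := by
      calc |∑ i ∈ Finset.Icc 1 (M n), (s n i - p)| ≤ ∑ i ∈ Finset.Icc 1 (M n), |s n i - p| :=
            Finset.abs_sum_le_sum_abs _ _
        _ ≤ (Finset.Icc 1 (M n)).card • (ε/4) :=
            Finset.sum_le_card_nsmul _ _ _ (fun i hi => le_of_lt (hN1 n hn1 i hi))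
        _ = (M n : ℝ) * (ε/4) := by rw [hcard n, nsmul_eq_mul]
    have hkey : (∑ i ∈ Finset.Icc 1 (M n), (s n i - t)) + t - (p - t) * (M n : ℝ)
        = (∑ i ∈ Finset.Icc 1 (M n), (s n i - p)) + t := by
      rw [Finset.sum_sub_distrib, Finset.sum_sub_distrib]
      simp [hcard n]
      ring
    rw [Real.dist_eq]
    have : ((∑ i ∈ Finset.Icc 1 (M n), (s n i - t)) + t) / (M n : ℝ) - (p - t)
        = ((∑ i ∈ Finset.Icc 1 (M n), (s n i - p)) + t) / (M n : ℝ) := by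
      rw [← hkey]; field_simp
    rw [this]
    have htM : t / (M n : ℝ) ≤ ε/2 := by
      rw [div_le_iff₀ hc]
      have : 2*t/ε ≤ (M n : ℝ) := hN2 n hn2
      rw [div_le_iff₀ hε] at this
      linarith
    have habs : |((∑ i ∈ Finset.Icc 1 (M n), (s n i - p)) + t)| ≤ (M n : ℝ) * (ε/4) + t := by
      calc |((∑ i ∈ Finset.Icc 1 (M n), (s n i - p)) + t)|
          ≤ |∑ i ∈ Finset.Icc 1 (M n), (s n i - p)| + |t| := abs_add_le _ _
        _ ≤ (M n : ℝ) * (ε/4) + t := by rw [abs_of_pos ht]; linarith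
    rw [abs_div, abs_of_pos hc, div_lt_iff₀ hc]
    have : (M n : ℝ) * (ε/4) + t ≤ (M n : ℝ) * (ε/4) + (M n : ℝ) * (ε/2) := by
      have := (div_le_iff₀ hc).mp htM
      nlinarith
    nlinarith [hMc n]
  -- f : (Σ s m) / M → p μ
  have hf : Tendsto (fun n => (∑ i ∈ Finset.Icc 1 (M n), s n i * m n i) / (M n : ℝ))
      atTop (𝓝 (p * μ)) := by
    rw [Metric.tendsto_atTop]
    intro ε hε
    set δ := min 1 (ε / (2 * (p + 1 + |μ|))) with hδdef
    have hδpos : 0 < δ := lt_min one_pos (by positivity)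
    obtain ⟨N1, hN1⟩ := hs δ hδpos
    obtain ⟨N2, hN2⟩ := hm δ hδpos
    refine ⟨max N1 N2, fun n hn => ?_⟩
    have hn1 : n ≥ N1 := le_trans (le_max_left _ _) hn
    have hn2 : n ≥ N2 := le_trans (le_max_right _ _) hn
    have hc := hMc n
    have hterm : ∀ i ∈ Finset.Icc 1 (M n), |s n i * m n i - p * μ| ≤ (p + 1 + |μ|) * δ := by
      intro i hi
      have h1 := hN1 n hn1 i hi
      have h2 := hN2 n hn2 i hi
      have hsb : |s n i| ≤ p + 1 := by
        have := abs_lt.mp h1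
        have hδ1 : δ ≤ 1 := min_le_left _ _
        rw [abs_le]; constructor <;> nlinarith [abs_nonneg (s n i)]
      calc |s n i * m n i - p * μ| = |s n i * (m n i - μ) + (s n i - p) * μ| := by ring_nf
        _ ≤ |s n i * (m n i - μ)| + |(s n i - p) * μ| := abs_add_le _ _
        _ = |s n i| * |m n i - μ| + |s n i - p| * |μ| := by rw [abs_mul, abs_mul]
        _ ≤ (p + 1) * δ + δ * |μ| :=
            add_le_add
              (mul_le_mul hsb (le_of_lt h2) (abs_nonneg _) (by positivity))
              (mul_le_mul_of_nonneg_right (le_of_lt h1) (abs_nonneg μ))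
        _ = (p + 1 + |μ|) * δ := by ring
    have hsum : |∑ i ∈ Finset.Icc 1 (M n), (s n i * m n i - p * μ)| ≤ (M n : ℝ) * ((p + 1 + |μ|) * δ) := by
      calc |∑ i ∈ Finset.Icc 1 (M n), (s n i * m n i - p * μ)|
          ≤ ∑ i ∈ Finset.Icc 1 (M n), |s n i * m n i - p * μ| := Finset.abs_sum_le_sum_abs _ _
        _ ≤ (Finset.Icc 1 (M n)).card • ((p + 1 + |μ|) * δ) := Finset.sum_le_card_nsmul _ _ _ hterm
        _ = (M n : ℝ) * ((p + 1 + |μ|) * δ) := by rw [hcard n, nsmul_eq_mul]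
    rw [Real.dist_eq]
    have heq : (∑ i ∈ Finset.Icc 1 (M n), s n i * m n i) / (M n : ℝ) - p * μ
        = (∑ i ∈ Finset.Icc 1 (M n), (s n i * m n i - p * μ)) / (M n : ℝ) := by
      rw [Finset.sum_sub_distrib, Finset.sum_const, hcard n, nsmul_eq_mul]
      field_simp
    rw [heq, abs_div, abs_of_pos hc, div_lt_iff₀ hc]
    have hδle : (p + 1 + |μ|) * δ ≤ ε/2 := by
      have : δ ≤ ε / (2 * (p + 1 + |μ|)) := min_le_right _ _
      rw [le_div_iff₀ (by positivity : (0:ℝ) < 2 * (p + 1 + |μ|))] at this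
      nlinarith [abs_nonneg μ]
    calc |∑ i ∈ Finset.Icc 1 (M n), (s n i * m n i - p * μ)|
        ≤ (M n : ℝ) * ((p + 1 + |μ|) * δ) := hsum
      _ ≤ (M n : ℝ) * (ε/2) := by gcongr
      _ < ε * (M n : ℝ) := by nlinarith
  -- assemble
  refine ⟨h1, hP, ?_, ?_⟩
  · simpa only [one_div, Pi.inv_def] using hP.inv_tendsto_atTop
  · have hquot := hf.div hg (ne_of_gt hpt)
    have heq : ∀ n, (∑ i ∈ Finset.Icc 1 (M n), s n i * m n i) /
        ((∑ i ∈ Finset.Icc 1 (M n), (s n i - t)) + t)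
        = ((∑ i ∈ Finset.Icc 1 (M n), s n i * m n i) / (M n : ℝ)) /
          (((∑ i ∈ Finset.Icc 1 (M n), (s n i - t)) + t) / (M n : ℝ)) := fun n =>
      div_div_aux _ _ _ (ne_of_gt (hMc n))
    have : p / (p - t) * μ = p * μ / (p - t) := by ring
    rw [this]
    exact hquot.congr fun n => (heq n).symm
end

section
/- Let p > t > 0 and μ be real numbers. Suppose (M_n) is a sequence of positive integers with M_n → ∞, and for each n there are positive reals s_{n,1},…,s_{n,M_n} and reals m_{n,1},…,m_{n,M_n} such that max_{1≤i≤M_n} |s_{n,i} − p| → 0 and max_{1≤i≤M_n} |m_{n,i} − μ| → 0. Define the RBCM weights β_{n,i} = (1/2) log(s_{n,i}/t) (i.e., half the log-ratio of prior variance 1/t to expert variance 1/s_{n,i}). Then the RBCM aggregated precision P_n = Σ_{i=1}^{M_n} β_{n,i}(s_{n,i} − t) + t tends to ∞ (so the RBCM prediction variance 1/P_n → 0), while the RBCM aggregated mean P_n^{-1} Σ_{i=1}^{M_n} β_{n,i} s_{n,i} m_{n,i} converges to a·μ where a = p/(p − t) > 1. -/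
open Filter Topology Finset

lemma rbcm_avg_tendsto (M : ℕ → ℕ) (hMpos : ∀ n, 0 < M n) (g : ℕ → ℕ → ℝ) (L : ℝ)
    (h : ∀ ε > (0 : ℝ), ∃ N : ℕ, ∀ n ≥ N, ∀ i ∈ Finset.Icc 1 (M n), |g n i - L| < ε) :
    Tendsto (fun n => (∑ i ∈ Finset.Icc 1 (M n), g n i) / (M n : ℝ)) atTop (𝓝 L) := by
  rw [Metric.tendsto_atTop]
  intro ε hε
  obtain ⟨N, hN⟩ := h (ε / 2) (by positivity)
  refine ⟨N, fun n hn => ?_⟩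
  have hM0 : (0 : ℝ) < (M n : ℝ) := Nat.cast_pos.mpr (hMpos n)
  have hcard : (Finset.Icc 1 (M n)).card = M n := by simp
  have hsum : |∑ i ∈ Finset.Icc 1 (M n), (g n i - L)| ≤ (M n : ℝ) * (ε / 2) := by
    calc |∑ i ∈ Finset.Icc 1 (M n), (g n i - L)|
        ≤ ∑ i ∈ Finset.Icc 1 (M n), |g n i - L| := Finset.abs_sum_le_sum_abs _ _
      _ ≤ ∑ _i ∈ Finset.Icc 1 (M n), (ε / 2) :=
          Finset.sum_le_sum (fun i hi => (hN n hn i hi).le)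
      _ = (M n : ℝ) * (ε / 2) := by rw [Finset.sum_const, hcard, nsmul_eq_mul]
  have key : (∑ i ∈ Finset.Icc 1 (M n), g n i) / (M n : ℝ) - L
      = (∑ i ∈ Finset.Icc 1 (M n), (g n i - L)) / (M n : ℝ) := by
    rw [Finset.sum_sub_distrib, Finset.sum_const, hcard, nsmul_eq_mul, sub_div,
      mul_div_cancel_left₀ _ hM0.ne']
  rw [Real.dist_eq, key, abs_div, abs_of_pos hM0]
  calc |∑ i ∈ Finset.Icc 1 (M n), (g n i - L)| / (M n : ℝ)
      ≤ ((M n : ℝ) * (ε / 2)) / (M n : ℝ) := by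
        exact div_le_div_of_nonneg_right hsum hM0.le
    _ = ε / 2 := mul_div_cancel_left₀ _ hM0.ne'
    _ < ε := by linarith

/-- RBCM under random partition, with weights `β_{n,i} = (1/2) log(s_{n,i}/t)`:
the aggregated precision `Σ β_i (s_i − t) + t` tends to infinity (so the RBCM variance
tends to 0), while the RBCM aggregated mean converges to `a·μ` with `a = p/(p − t) > 1`. -/
theorem rbcm_random_partition_inconsistency
    (p t μ : ℝ) (ht : 0 < t) (htp : t < p)
    (M : ℕ → ℕ) (hMpos : ∀ n, 0 < M n)
    (hM : Tendsto (fun n => (M n : ℝ)) atTop atTop)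
    (s m : ℕ → ℕ → ℝ)
    (hspos : ∀ n, ∀ i ∈ Finset.Icc 1 (M n), 0 < s n i)
    (hs : ∀ ε > (0 : ℝ), ∃ N : ℕ, ∀ n ≥ N, ∀ i ∈ Finset.Icc 1 (M n), |s n i - p| < ε)
    (hm : ∀ ε > (0 : ℝ), ∃ N : ℕ, ∀ n ≥ N, ∀ i ∈ Finset.Icc 1 (M n), |m n i - μ| < ε) :
    1 < p / (p - t) ∧
    Tendsto (fun n => (∑ i ∈ Finset.Icc 1 (M n),
      (1 / 2) * Real.log (s n i / t) * (s n i - t)) + t) atTop atTop ∧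
    Tendsto (fun n => 1 / ((∑ i ∈ Finset.Icc 1 (M n),
      (1 / 2) * Real.log (s n i / t) * (s n i - t)) + t)) atTop (𝓝 0) ∧
    Tendsto (fun n => (∑ i ∈ Finset.Icc 1 (M n),
        (1 / 2) * Real.log (s n i / t) * (s n i * m n i)) /
      ((∑ i ∈ Finset.Icc 1 (M n), (1 / 2) * Real.log (s n i / t) * (s n i - t)) + t))
      atTop (𝓝 (p / (p - t) * μ)) := by
  have hp : 0 < p := ht.trans htp
  have hpt : 0 < p - t := sub_pos.mpr htp
  set b : ℝ := (1 / 2) * Real.log (p / t) with hb_def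
  have hb : 0 < b := by
    have h1 : 1 < p / t := (one_lt_div ht).mpr htp
    have := Real.log_pos h1
    positivity
  set A : ℕ → ℝ := fun n => ∑ i ∈ Finset.Icc 1 (M n),
      (1 / 2) * Real.log (s n i / t) * (s n i - t) with hA_def
  set B : ℕ → ℝ := fun n => ∑ i ∈ Finset.Icc 1 (M n),
      (1 / 2) * Real.log (s n i / t) * (s n i * m n i) with hB_def
  -- continuity of the per-term functions
  have hφcont : ContinuousAt (fun x : ℝ => (1 / 2) * Real.log (x / t) * (x - t)) p := by
    have hlog : ContinuousAt (fun x : ℝ => Real.log (x / t)) p :=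
      ContinuousAt.log ((continuousAt_id).div_const t) (by positivity)
    exact (continuousAt_const.mul hlog).mul ((continuousAt_id).sub continuousAt_const)
  have hFcont : ContinuousAt (fun q : ℝ × ℝ => (1 / 2) * Real.log (q.1 / t) * (q.1 * q.2))
      (p, μ) := by
    have hlog : ContinuousAt (fun q : ℝ × ℝ => Real.log (q.1 / t)) (p, μ) :=
      ContinuousAt.log (continuousAt_fst.div_const t)
        (by simp only []; positivity)
    exact (continuousAt_const.mul hlog).mul (continuousAt_fst.mul continuousAt_snd)
  -- uniform convergence of terms
  have hAterm : ∀ ε > (0 : ℝ), ∃ N : ℕ, ∀ n ≥ N, ∀ i ∈ Finset.Icc 1 (M n),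
      |(1 / 2) * Real.log (s n i / t) * (s n i - t) - b * (p - t)| < ε := by
    intro ε hε
    rw [Metric.continuousAt_iff] at hφcont
    obtain ⟨δ, hδ, hφ⟩ := hφcont ε hε
    obtain ⟨N, hN⟩ := hs δ hδ
    refine ⟨N, fun n hn i hi => ?_⟩
    have := hφ (x := s n i) (by rw [Real.dist_eq]; exact hN n hn i hi)
    rwa [Real.dist_eq] at this
  have hBterm : ∀ ε > (0 : ℝ), ∃ N : ℕ, ∀ n ≥ N, ∀ i ∈ Finset.Icc 1 (M n),
      |(1 / 2) * Real.log (s n i / t) * (s n i * m n i) - b * (p * μ)| < ε := by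
    intro ε hε
    rw [Metric.continuousAt_iff] at hFcont
    obtain ⟨δ, hδ, hF⟩ := hFcont ε hε
    obtain ⟨N₁, hN₁⟩ := hs δ hδ
    obtain ⟨N₂, hN₂⟩ := hm δ hδ
    refine ⟨max N₁ N₂, fun n hn i hi => ?_⟩
    have hdist : dist ((s n i, m n i) : ℝ × ℝ) (p, μ) < δ := by
      rw [Prod.dist_eq]
      exact max_lt (by rw [Real.dist_eq]; exact hN₁ n (le_of_max_le_left hn) i hi)
        (by rw [Real.dist_eq]; exact hN₂ n (le_of_max_le_right hn) i hi)
    have := hF hdist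
    rwa [Real.dist_eq] at this
  have hA : Tendsto (fun n => A n / (M n : ℝ)) atTop (𝓝 (b * (p - t))) :=
    rbcm_avg_tendsto M hMpos _ _ hAterm
  have hB : Tendsto (fun n => B n / (M n : ℝ)) atTop (𝓝 (b * (p * μ))) :=
    rbcm_avg_tendsto M hMpos _ _ hBterm
  have hMne : ∀ n, ((M n : ℝ)) ≠ 0 := fun n => (Nat.cast_pos.mpr (hMpos n)).ne'
  have hL1 : 0 < b * (p - t) := by positivity
  -- Part 2: precision tends to infinity
  have hAtop : Tendsto A atTop atTop := by
    have h1 : Tendsto (fun n => (A n / (M n : ℝ)) * (M n : ℝ)) atTop atTop :=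
      Tendsto.pos_mul_atTop hL1 hA hM
    have h2 : ∀ n, (A n / (M n : ℝ)) * (M n : ℝ) = A n := fun n =>
      div_mul_cancel₀ _ (hMne n)
    simpa [h2] using h1
  have hPtop : Tendsto (fun n => A n + t) atTop atTop :=
    tendsto_atTop_add_const_right _ t hAtop
  -- Part 3: variance tends to 0
  have hvar : Tendsto (fun n => 1 / (A n + t)) atTop (𝓝 0) := by
    simpa [one_div, Pi.inv_def] using hPtop.inv_tendsto_atTop
  -- Part 4: mean
  have hinv : Tendsto (fun n => ((M n : ℝ))⁻¹) atTop (𝓝 0) := hM.inv_tendsto_atTop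
  have hPM : Tendsto (fun n => (A n + t) / (M n : ℝ)) atTop (𝓝 (b * (p - t))) := by
    have h1 : Tendsto (fun n => A n / (M n : ℝ) + t * ((M n : ℝ))⁻¹) atTop
        (𝓝 (b * (p - t) + t * 0)) := hA.add (hinv.const_mul t)
    simpa [div_eq_mul_inv, add_mul] using h1
  have hratio : Tendsto (fun n => (B n / (M n : ℝ)) / ((A n + t) / (M n : ℝ))) atTop
      (𝓝 (b * (p * μ) / (b * (p - t)))) := hB.div hPM hL1.ne'
  have heq : ∀ n, (B n / (M n : ℝ)) / ((A n + t) / (M n : ℝ)) = B n / (A n + t) := by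
    intro n
    rw [div_div_div_cancel_right₀]
    exact hMne n
  have hlimval : b * (p * μ) / (b * (p - t)) = p / (p - t) * μ := by
    field_simp
  have hmean : Tendsto (fun n => B n / (A n + t)) atTop (𝓝 (p / (p - t) * μ)) := by
    rw [← hlimval]
    simpa [heq] using hratio
  exact ⟨(one_lt_div hpt).mpr (by linarith), hPtop, hvar, hmean⟩
end

section
/- Let t > 0 be a real number. Suppose (M_n) is a sequence of positive integers with M_n → ∞, and (c_n) is a sequence of positive reals with liminf_{n→∞} c_n > 0. Suppose for each n there are reals s_{n,1}, …, s_{n,M_n} ≥ t and an index a_n such that s_{n,i} − t ≥ c_n for all i ≠ a_n, and define the RBCM weights β_{n,i} = (1/2) log(s_{n,i}/t) ≥ 0. Then the RBCM aggregated precision P_n = Σ_{i=1}^{M_n} β_{n,i}(s_{n,i} − t) + t satisfies P_n ≥ (M_n − 1) · (1/2) log(1 + c_n/t) · c_n + t, hence P_n → ∞ and the RBCM prediction variance 1/P_n → 0. -/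
open Filter Topology Finset

/-- Proposition 1, RBCM case (disjoint partition): with weights
`β_{n,i} = (1/2) log(s_{n,i}/t) ≥ 0` and all experts except the one indexed `a_n` having
precision at least `t + c_n` with `liminf c_n > 0`, the RBCM aggregated precision
`P_n = Σ β_{n,i}(s_{n,i} − t) + t` satisfies
`P_n ≥ (M_n − 1)·(1/2) log(1 + c_n/t)·c_n + t`, hence `P_n → ∞` and `1/P_n → 0`. -/
theorem rbcm_disjoint_overconfident
    (t : ℝ) (ht : 0 < t)
    (M : ℕ → ℕ) (hMpos : ∀ n, 0 < M n)
    (hM : Tendsto (fun n => (M n : ℝ)) atTop atTop)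
    (c : ℕ → ℝ) (hcpos : ∀ n, 0 < c n)
    (hliminf : 0 < Filter.liminf c atTop)
    (s : ℕ → ℕ → ℝ) (a : ℕ → ℕ) (ha : ∀ n, a n ∈ Finset.Icc 1 (M n))
    (hst : ∀ n, ∀ i ∈ Finset.Icc 1 (M n), t ≤ s n i)
    (hs : ∀ n, ∀ i ∈ Finset.Icc 1 (M n), i ≠ a n → c n ≤ s n i - t) :
    (∀ n, ((M n : ℝ) - 1) * ((1 / 2) * Real.log (1 + c n / t)) * c n + t ≤
      (∑ i ∈ Finset.Icc 1 (M n), (1 / 2) * Real.log (s n i / t) * (s n i - t)) + t) ∧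
    Tendsto (fun n => (∑ i ∈ Finset.Icc 1 (M n),
      (1 / 2) * Real.log (s n i / t) * (s n i - t)) + t) atTop atTop ∧
    Tendsto (fun n => 1 / ((∑ i ∈ Finset.Icc 1 (M n),
      (1 / 2) * Real.log (s n i / t) * (s n i - t)) + t)) atTop (𝓝 0) := by
  -- key lower bound
  have key : ∀ n, ((M n : ℝ) - 1) * ((1 / 2) * Real.log (1 + c n / t)) * c n ≤
      ∑ i ∈ Finset.Icc 1 (M n), (1 / 2) * Real.log (s n i / t) * (s n i - t) := by
    intro n
    have hsub : (Finset.Icc 1 (M n)).erase (a n) ⊆ Finset.Icc 1 (M n) :=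
      Finset.erase_subset _ _
    have hterm_nonneg : ∀ i ∈ Finset.Icc 1 (M n),
        0 ≤ (1 / 2) * Real.log (s n i / t) * (s n i - t) := by
      intro i hi
      have h1 : t ≤ s n i := hst n i hi
      have hlog : 0 ≤ Real.log (s n i / t) := by
        apply Real.log_nonneg
        rw [le_div_iff₀ ht]; linarith
      have h2 : (0:ℝ) ≤ s n i - t := by linarith
      positivity
    have hstep : ∀ i ∈ (Finset.Icc 1 (M n)).erase (a n),
        (1 / 2) * Real.log (1 + c n / t) * c n ≤
        (1 / 2) * Real.log (s n i / t) * (s n i - t) := by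
      intro i hi
      obtain ⟨hne, hmem⟩ := Finset.mem_erase.mp hi
      have h1 : t ≤ s n i := hst n i hmem
      have h2 : c n ≤ s n i - t := hs n i hmem hne
      have hc := hcpos n
      have hlog : Real.log (1 + c n / t) ≤ Real.log (s n i / t) := by
        apply Real.log_le_log (by positivity)
        rw [le_div_iff₀ ht]
        have he : (1 + c n / t) * t = t + c n := by field_simp
        rw [he]; linarith
      have hlognn : 0 ≤ Real.log (1 + c n / t) := by
        apply Real.log_nonneg; nlinarith [div_pos hc ht]
      nlinarith
    have hcard : ((Finset.Icc 1 (M n)).erase (a n)).card = M n - 1 := by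
      rw [Finset.card_erase_of_mem (ha n), Nat.card_Icc]; omega
    calc ((M n : ℝ) - 1) * ((1 / 2) * Real.log (1 + c n / t)) * c n
        = (((Finset.Icc 1 (M n)).erase (a n)).card : ℝ) *
          ((1 / 2) * Real.log (1 + c n / t) * c n) := by
          rw [hcard]
          have h : (1:ℕ) ≤ M n := hMpos n
          have h2 : M n + 1 - 1 - 1 = M n - 1 := by omega
          push_cast [Nat.cast_sub h]
          ring
      _ ≤ ∑ i ∈ (Finset.Icc 1 (M n)).erase (a n),
          (1 / 2) * Real.log (s n i / t) * (s n i - t) := by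
          rw [← nsmul_eq_mul]
          exact Finset.card_nsmul_le_sum _ _ _ hstep
      _ ≤ ∑ i ∈ Finset.Icc 1 (M n), (1 / 2) * Real.log (s n i / t) * (s n i - t) :=
          Finset.sum_le_sum_of_subset_of_nonneg hsub
            (fun i hi _ => hterm_nonneg i hi)
  have hP : Tendsto (fun n => (∑ i ∈ Finset.Icc 1 (M n),
      (1 / 2) * Real.log (s n i / t) * (s n i - t)) + t) atTop atTop := by
    set ε := Filter.liminf c atTop / 2 with hε
    have hεpos : 0 < ε := by positivity
    have hεlt : ε < Filter.liminf c atTop := by rw [hε]; linarith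
    have hbdd : Filter.IsBoundedUnder (· ≥ ·) atTop c :=
      Filter.isBoundedUnder_of ⟨0, fun n => (hcpos n).le⟩
    have hev : ∀ᶠ n in atTop, ε < c n :=
      Filter.eventually_lt_of_lt_liminf hεlt hbdd
    set K := (1 / 2) * Real.log (1 + ε / t) * ε with hK
    have hKpos : 0 < K := by
      have hl : 0 < Real.log (1 + ε / t) := by
        apply Real.log_pos
        have : 0 < ε / t := by positivity
        linarith
      positivity
    have htend : Tendsto (fun n => ((M n : ℝ) - 1) * K + t) atTop atTop := by
      apply Filter.tendsto_atTop_add_const_right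
      exact Tendsto.atTop_mul_const hKpos (Filter.tendsto_atTop_add_const_right _ (-1) hM)
    apply tendsto_atTop_mono' _ _ htend
    filter_upwards [hev] with n hn
    have hMn1 : (0:ℝ) ≤ (M n : ℝ) - 1 := by
      have h := hMpos n
      have h1 : (1:ℝ) ≤ (M n : ℝ) := by exact_mod_cast h
      linarith
    have hKle : K ≤ (1 / 2) * Real.log (1 + c n / t) * c n := by
      have hlog : Real.log (1 + ε / t) ≤ Real.log (1 + c n / t) := by
        apply Real.log_le_log (by positivity)
        have h' : ε / t ≤ c n / t := by gcongr
        linarith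
      have hlognn : 0 ≤ Real.log (1 + ε / t) := by
        apply Real.log_nonneg; nlinarith [div_pos hεpos ht]
      rw [hK]
      nlinarith
    have hk := key n
    have h1 : ((M n : ℝ) - 1) * K ≤
        ((M n : ℝ) - 1) * ((1 / 2) * Real.log (1 + c n / t)) * c n := by
      calc ((M n : ℝ) - 1) * K
          ≤ ((M n : ℝ) - 1) * ((1 / 2) * Real.log (1 + c n / t) * c n) :=
            mul_le_mul_of_nonneg_left hKle hMn1
        _ = ((M n : ℝ) - 1) * ((1 / 2) * Real.log (1 + c n / t)) * c n := by ring
    linarith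
  refine ⟨fun n => by linarith [key n], hP, ?_⟩
  simpa [one_div, Pi.inv_def] using hP.inv_tendsto_atTop
end

section
/- Let p > t > 0 and c > 0 be real numbers with t + c ≤ p. Suppose (M_n) is a sequence of positive integers with M_n → ∞, and for each n there are reals s_{n,1}, …, s_{n,M_n} and an index a_n such that: s_{n,a_n} → p as n → ∞; for every i ≠ a_n, t + c ≤ s_{n,i} ≤ u_n where (u_n) is a sequence with u_n → p. Then the GPoE aggregated precision with equal weights, g_n = (1/M_n) Σ_{i=1}^{M_n} s_{n,i}, satisfies limsup_{n→∞} g_n ≤ p and liminf_{n→∞} g_n ≥ t + c. Consequently the GPoE prediction variance 1/g_n satisfies liminf 1/g_n ≥ 1/p = σ_η^2 and limsup 1/g_n ≤ 1/(t + c) < 1/t = σ_{**}^2, i.e., GPoE is conservative: its limiting variance stays at or above the true noise variance and strictly below the prior variance. -/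
open Filter Topology Finset

/-- Proposition 1, GPoE case (disjoint partition): with equal weights `1/M_n`, only the
expert `a_n` covering the test point has precision converging to the true precision `p`,
while all other experts' precisions lie in `[t + c, u_n]` with `u_n → p`. Then the GPoE
aggregated precision `g_n = (1/M_n) Σ s_{n,i}` satisfies `limsup g_n ≤ p` and
`liminf g_n ≥ t + c`; consequently the GPoE variance `1/g_n` satisfies
`liminf 1/g_n ≥ 1/p` and `limsup 1/g_n ≤ 1/(t+c) < 1/t`. -/
theorem gpoe_disjoint_conservative
    (p t c : ℝ) (ht : 0 < t) (hc : 0 < c) (htp : t < p) (htc : t + c ≤ p)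
    (M : ℕ → ℕ) (hMpos : ∀ n, 0 < M n)
    (hM : Tendsto (fun n => (M n : ℝ)) atTop atTop)
    (s : ℕ → ℕ → ℝ) (a : ℕ → ℕ) (ha : ∀ n, a n ∈ Finset.Icc 1 (M n))
    (hsa : Tendsto (fun n => s n (a n)) atTop (𝓝 p))
    (u : ℕ → ℝ) (hu : Tendsto u atTop (𝓝 p))
    (hs : ∀ n, ∀ i ∈ Finset.Icc 1 (M n), i ≠ a n → t + c ≤ s n i ∧ s n i ≤ u n) :
    Filter.limsup (fun n => (1 / (M n : ℝ)) * ∑ i ∈ Finset.Icc 1 (M n), s n i) atTop ≤ p ∧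
    t + c ≤ Filter.liminf
      (fun n => (1 / (M n : ℝ)) * ∑ i ∈ Finset.Icc 1 (M n), s n i) atTop ∧
    1 / p ≤ Filter.liminf
      (fun n => 1 / ((1 / (M n : ℝ)) * ∑ i ∈ Finset.Icc 1 (M n), s n i)) atTop ∧
    Filter.limsup
      (fun n => 1 / ((1 / (M n : ℝ)) * ∑ i ∈ Finset.Icc 1 (M n), s n i)) atTop ≤
      1 / (t + c) ∧
    1 / (t + c) < 1 / t := by
  set g : ℕ → ℝ := fun n => (1 / (M n : ℝ)) * ∑ i ∈ Finset.Icc 1 (M n), s n i with hg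
  set mm : ℕ → ℝ := fun n => min (t + c) (s n (a n)) with hmm
  set MM : ℕ → ℝ := fun n => max (u n) (s n (a n)) with hMM
  have hMne : ∀ n, (0:ℝ) < (M n : ℝ) := fun n => by exact_mod_cast hMpos n
  have hcard : ∀ n, (Finset.Icc 1 (M n)).card = M n := fun n => by
    simp [Nat.card_Icc]
  have hlow : ∀ n, mm n ≤ g n := by
    intro n
    have hsum : (M n : ℝ) * mm n ≤ ∑ i ∈ Finset.Icc 1 (M n), s n i := by
      calc (M n : ℝ) * mm n = ∑ i ∈ Finset.Icc 1 (M n), mm n := by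
            rw [Finset.sum_const, hcard, nsmul_eq_mul]
        _ ≤ ∑ i ∈ Finset.Icc 1 (M n), s n i := by
            apply Finset.sum_le_sum
            intro i hi
            rcases eq_or_ne i (a n) with h | h
            · subst h; exact min_le_right _ _
            · exact le_trans (min_le_left _ _) (hs n i hi h).1
    have := mul_le_mul_of_nonneg_left hsum (le_of_lt (one_div_pos.mpr (hMne n)))
    calc mm n = (1 / (M n : ℝ)) * ((M n : ℝ) * mm n) := by
          rw [← mul_assoc, one_div, inv_mul_cancel₀ (ne_of_gt (hMne n)), one_mul]
      _ ≤ g n := this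
  have hhigh : ∀ n, g n ≤ MM n := by
    intro n
    have hsum : ∑ i ∈ Finset.Icc 1 (M n), s n i ≤ (M n : ℝ) * MM n := by
      calc ∑ i ∈ Finset.Icc 1 (M n), s n i ≤ ∑ i ∈ Finset.Icc 1 (M n), MM n := by
            apply Finset.sum_le_sum
            intro i hi
            rcases eq_or_ne i (a n) with h | h
            · subst h; exact le_max_right _ _
            · exact le_trans (hs n i hi h).2 (le_max_left _ _)
        _ = (M n : ℝ) * MM n := by rw [Finset.sum_const, hcard, nsmul_eq_mul]
    have := mul_le_mul_of_nonneg_left hsum (le_of_lt (one_div_pos.mpr (hMne n)))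
    calc g n ≤ (1 / (M n : ℝ)) * ((M n : ℝ) * MM n) := this
      _ = MM n := by
          rw [← mul_assoc, one_div, inv_mul_cancel₀ (ne_of_gt (hMne n)), one_mul]
  have hmm_t : Tendsto mm atTop (𝓝 (t + c)) := by
    have : Tendsto mm atTop (𝓝 (min (t + c) p)) := tendsto_const_nhds.min hsa
    rwa [min_eq_left htc] at this
  have hMM_t : Tendsto MM atTop (𝓝 p) := by
    have : Tendsto MM atTop (𝓝 (max p p)) := hu.max hsa
    rwa [max_self] at this
  have htc_pos : (0:ℝ) < t + c := by linarith
  have hp_pos : (0:ℝ) < p := by linarith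
  -- eventually g is positive, in fact ≥ t
  have hmm_ev : ∀ᶠ n in atTop, t < mm n :=
    hmm_t.eventually (eventually_gt_nhds (by linarith))
  have hg_pos : ∀ᶠ n in atTop, 0 < g n := by
    filter_upwards [hmm_ev] with n hn
    exact lt_of_lt_of_le (lt_trans ht hn) (hlow n)
  -- boundedness facts
  have hbd_MM_le : IsBoundedUnder (· ≤ ·) atTop MM := hMM_t.isBoundedUnder_le
  have hbd_mm_ge : IsBoundedUnder (· ≥ ·) atTop mm := hmm_t.isBoundedUnder_ge
  have hbd_g_ge : IsBoundedUnder (· ≥ ·) atTop g :=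
    hbd_mm_ge.mono_ge (Eventually.of_forall hlow)
  have hbd_g_le : IsBoundedUnder (· ≤ ·) atTop g :=
    hbd_MM_le.mono_le (Eventually.of_forall hhigh)
  have h1 : limsup g atTop ≤ p := by
    have := limsup_le_limsup (Eventually.of_forall hhigh)
      hbd_g_ge.isCoboundedUnder_le hbd_MM_le
    rwa [hMM_t.limsup_eq] at this
  have h2 : t + c ≤ liminf g atTop := by
    have := liminf_le_liminf (Eventually.of_forall hlow)
      hbd_mm_ge hbd_g_le.isCoboundedUnder_ge
    rwa [hmm_t.liminf_eq] at this
  refine ⟨h1, h2, ?_, ?_, ?_⟩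
  · -- 1/p ≤ liminf 1/g
    have hinvMM : Tendsto (fun n => 1 / MM n) atTop (𝓝 (1 / p)) := by
      simpa [one_div] using hMM_t.inv₀ (ne_of_gt hp_pos)
    have hev : ∀ᶠ n in atTop, 1 / MM n ≤ 1 / g n := by
      filter_upwards [hg_pos] with n hn
      exact one_div_le_one_div_of_le hn (hhigh n)
    have hbd : IsBoundedUnder (· ≥ ·) atTop fun n => 1 / g n := by
      apply isBoundedUnder_of_eventually_ge (a := (0:ℝ))
      filter_upwards [hg_pos] with n hn
      exact le_of_lt (one_div_pos.mpr hn)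
    have hcb : IsCoboundedUnder (· ≥ ·) atTop fun n => 1 / g n := by
      apply IsBoundedUnder.isCoboundedUnder_ge
      apply isBoundedUnder_of_eventually_le (a := 1 / (t / 2))
      filter_upwards [hmm_ev] with n hn
      exact one_div_le_one_div_of_le (by linarith) (le_trans (by linarith [lt_trans ht hn]) (hlow n))
    have := liminf_le_liminf hev hinvMM.isBoundedUnder_ge hcb
    rwa [hinvMM.liminf_eq] at this
  · -- limsup 1/g ≤ 1/(t+c)
    have hinvmm : Tendsto (fun n => 1 / mm n) atTop (𝓝 (1 / (t + c))) := by
      simpa [one_div] using hmm_t.inv₀ (ne_of_gt htc_pos)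
    have hev : ∀ᶠ n in atTop, 1 / g n ≤ 1 / mm n := by
      filter_upwards [hmm_ev] with n hn
      exact one_div_le_one_div_of_le (lt_trans ht hn) (hlow n)
    have hbd : IsBoundedUnder (· ≥ ·) atTop fun n => 1 / g n := by
      apply isBoundedUnder_of_eventually_ge (a := (0:ℝ))
      filter_upwards [hg_pos] with n hn
      exact le_of_lt (one_div_pos.mpr hn)
    have := limsup_le_limsup hev hbd.isCoboundedUnder_le hinvmm.isBoundedUnder_le
    rwa [hinvmm.limsup_eq] at this
  · exact one_div_lt_one_div_of_lt ht (by linarith)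
end

section
/- Let σ₀ > 0, a > 0, C > 0, c > 0 be real constants. Let (M_n) be a sequence of positive integers with M_n → ∞ and n / M_n² ≥ c, and (r_n) a sequence with 0 < r_n ≤ C M_n / n. Suppose that for each n and each index 3 ≤ i ≤ M_n there are reals v_{n,i}, v_{c,n}, σ_n² with σ_n² ≥ σ₀ and σ_n² < v_{n,i} ≤ v_{c,n} ≤ a r_n² + σ_n². Then the GRBCM correction sum S_n = Σ_{i=3}^{M_n} (1/2) log(v_{c,n} / v_{n,i}) · (1/v_{n,i} − 1/v_{c,n}) converges to 0 as n → ∞. -/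
open Filter Topology Finset

/-- Eq. (zero_GRBCM) in the proof of Proposition 3: the GRBCM correction sum
`S_n = Σ_{i=3}^{M_n} (1/2) log(v_c/v_i) (1/v_i − 1/v_c)` converges to 0, given
`M_n → ∞`, `n/M_n² ≥ c`, `0 < r_n ≤ C M_n/n`, noise variances bounded below by `σ₀`,
and `σ_n² < v_{n,i} ≤ v_{c,n} ≤ a r_n² + σ_n²`. -/
theorem grbcm_correction_sum_tendsto_zero
    (σ0 a C c : ℝ) (hσ0 : 0 < σ0) (ha : 0 < a) (hC : 0 < C) (hc : 0 < c)
    (M : ℕ → ℕ) (hMpos : ∀ n, 0 < M n)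
    (hM : Tendsto (fun n => (M n : ℝ)) atTop atTop)
    (hnM : ∀ᶠ n : ℕ in atTop, c ≤ (n : ℝ) / (M n : ℝ) ^ 2)
    (r : ℕ → ℝ)
    (hr : ∀ᶠ n : ℕ in atTop, 0 < r n ∧ r n ≤ C * (M n : ℝ) / (n : ℝ))
    (v : ℕ → ℕ → ℝ) (vc σ2 : ℕ → ℝ)
    (hσ2 : ∀ n, σ0 ≤ σ2 n)
    (hv : ∀ n, ∀ i ∈ Finset.Icc 3 (M n),
      σ2 n < v n i ∧ v n i ≤ vc n ∧ vc n ≤ a * r n ^ 2 + σ2 n) :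
    Tendsto (fun n => ∑ i ∈ Finset.Icc 3 (M n),
      (1 / 2) * Real.log (vc n / v n i) * (1 / v n i - 1 / vc n)) atTop (𝓝 0) := by
  set K : ℝ := a ^ 2 * C ^ 4 / (2 * σ0 ^ 3 * c ^ 4) with hK
  have hbound : Tendsto (fun n => K / (M n : ℝ) ^ 3) atTop (𝓝 0) :=
    tendsto_const_nhds.div_atTop ((tendsto_pow_atTop (three_ne_zero)).comp hM)
  apply squeeze_zero' ?_ ?_ hbound
  · -- nonnegativity
    filter_upwards [] with n
    apply Finset.sum_nonneg
    intro i hi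
    obtain ⟨h1, h2, h3⟩ := hv n i hi
    have hv0 : 0 < v n i := lt_of_lt_of_le (lt_of_lt_of_le hσ0 (hσ2 n)) h1.le
    have hvc0 : 0 < vc n := lt_of_lt_of_le hv0 h2
    have hlog : 0 ≤ Real.log (vc n / v n i) :=
      Real.log_nonneg ((one_le_div hv0).2 h2)
    have hdiff : 0 ≤ 1 / v n i - 1 / vc n := by
      have := one_div_le_one_div_of_le hv0 h2
      linarith
    positivity
  · -- eventual bound
    filter_upwards [hnM, hr, eventually_gt_atTop 0] with n hn hrn hn0
    obtain ⟨hr0, hrle⟩ := hrn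
    have hMn : (0:ℝ) < (M n : ℝ) := by exact_mod_cast hMpos n
    have hnR : (0:ℝ) < (n : ℝ) := by exact_mod_cast hn0
    have hncM : c * (M n : ℝ) ^ 2 ≤ (n : ℝ) := by
      rw [le_div_iff₀ (by positivity)] at hn
      exact hn
    have hσ0n : σ0 ≤ σ2 n := hσ2 n
    -- per-term bound
    have hterm : ∀ i ∈ Finset.Icc 3 (M n),
        (1 / 2) * Real.log (vc n / v n i) * (1 / v n i - 1 / vc n)
          ≤ a ^ 2 * r n ^ 4 / (2 * σ0 ^ 3) := by
      intro i hi
      obtain ⟨h1, h2, h3⟩ := hv n i hi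
      have hv0 : 0 < v n i := lt_of_lt_of_le (lt_of_lt_of_le hσ0 hσ0n) h1.le
      have hvc0 : 0 < vc n := lt_of_lt_of_le hv0 h2
      have hvσ : σ0 ≤ v n i := le_trans hσ0n h1.le
      have hgap : vc n - v n i ≤ a * r n ^ 2 := by
        have : σ2 n ≤ v n i := h1.le
        linarith
      have hlog : Real.log (vc n / v n i) ≤ a * r n ^ 2 / σ0 := by
        have h := Real.log_le_sub_one_of_pos (div_pos hvc0 hv0)
        have heq : vc n / v n i - 1 = (vc n - v n i) / v n i := by
          field_simp
        rw [heq] at h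
        refine h.trans ?_
        exact div_le_div₀ (by positivity) hgap hσ0 hvσ
      have hdiff : 1 / v n i - 1 / vc n ≤ a * r n ^ 2 / σ0 ^ 2 := by
        have heq : 1 / v n i - 1 / vc n = (vc n - v n i) / (v n i * vc n) := by
          field_simp
        rw [heq]
        apply div_le_div₀ (by positivity) hgap (by positivity)
        have hvcσ : σ0 ≤ vc n := le_trans hvσ h2
        calc σ0 ^ 2 = σ0 * σ0 := sq σ0
          _ ≤ v n i * vc n := mul_le_mul hvσ hvcσ hσ0.le (by positivity)
      have hdnn : 0 ≤ 1 / v n i - 1 / vc n := by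
        have := one_div_le_one_div_of_le hv0 h2
        linarith
      have hlognn : 0 ≤ Real.log (vc n / v n i) :=
        Real.log_nonneg ((one_le_div hv0).2 h2)
      calc (1 / 2) * Real.log (vc n / v n i) * (1 / v n i - 1 / vc n)
          ≤ (1 / 2) * (a * r n ^ 2 / σ0) * (a * r n ^ 2 / σ0 ^ 2) := by
            apply mul_le_mul _ hdiff hdnn (by positivity)
            exact mul_le_mul_of_nonneg_left hlog (by norm_num)
        _ = a ^ 2 * r n ^ 4 / (2 * σ0 ^ 3) := by ring
    have hsum : (∑ i ∈ Finset.Icc 3 (M n),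
        (1 / 2) * Real.log (vc n / v n i) * (1 / v n i - 1 / vc n))
          ≤ (M n : ℝ) * (a ^ 2 * r n ^ 4 / (2 * σ0 ^ 3)) := by
      calc _ ≤ (Finset.Icc 3 (M n)).card • (a ^ 2 * r n ^ 4 / (2 * σ0 ^ 3)) :=
            Finset.sum_le_card_nsmul _ _ _ hterm
        _ = ((Finset.Icc 3 (M n)).card : ℝ) * (a ^ 2 * r n ^ 4 / (2 * σ0 ^ 3)) := by
            simp [nsmul_eq_mul]
        _ ≤ (M n : ℝ) * (a ^ 2 * r n ^ 4 / (2 * σ0 ^ 3)) := by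
            apply mul_le_mul_of_nonneg_right _ (by positivity)
            rw [Nat.card_Icc]
            exact_mod_cast (by omega : M n + 1 - 3 ≤ M n)
    refine hsum.trans ?_
    have hr4 : r n ^ 4 ≤ C ^ 4 * (M n : ℝ) ^ 4 / (n : ℝ) ^ 4 := by
      calc r n ^ 4 ≤ (C * (M n : ℝ) / (n : ℝ)) ^ 4 := pow_le_pow_left₀ hr0.le hrle 4
        _ = C ^ 4 * (M n : ℝ) ^ 4 / (n : ℝ) ^ 4 := by
          rw [div_pow, mul_pow]
    have hn4 : c ^ 4 * (M n : ℝ) ^ 8 ≤ (n : ℝ) ^ 4 := by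
      calc c ^ 4 * (M n : ℝ) ^ 8 = (c * (M n : ℝ) ^ 2) ^ 4 := by ring
        _ ≤ (n : ℝ) ^ 4 := pow_le_pow_left₀ (by positivity) hncM 4
    calc (M n : ℝ) * (a ^ 2 * r n ^ 4 / (2 * σ0 ^ 3))
        ≤ (M n : ℝ) * (a ^ 2 * (C ^ 4 * (M n : ℝ) ^ 4 / (n : ℝ) ^ 4) / (2 * σ0 ^ 3)) := by
          gcongr
      _ = a ^ 2 * C ^ 4 * (M n : ℝ) ^ 5 / (2 * σ0 ^ 3 * (n : ℝ) ^ 4) := by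
          field_simp
      _ ≤ K / (M n : ℝ) ^ 3 := by
          rw [hK, div_div, div_le_div_iff₀ (by positivity) (by positivity)]
          nlinarith [mul_le_mul_of_nonneg_left hn4
            (by positivity : (0:ℝ) ≤ a ^ 2 * C ^ 4 * (2 * σ0 ^ 3))]
end

section
/- Let p > 0, σ₀ > 0, a > 0, C > 0, c > 0 be real constants. Let (M_n) be a sequence of positive integers with M_n → ∞ and n / M_n² ≥ c, and (r_n) with 0 < r_n ≤ C M_n / n. Suppose for each n: (i) v_{+2,n} > 0 with 1/v_{+2,n} → p; (ii) for each 3 ≤ i ≤ M_n there are reals v_{n,i}, v_{c,n}, σ_n² with σ_n² ≥ σ₀ and σ_n² < v_{n,i} ≤ v_{c,n} ≤ a r_n² + σ_n². Then the GRBCM aggregated precision P_n = 1/v_{+2,n} + Σ_{i=3}^{M_n} (1/2) log(v_{c,n}/v_{n,i}) · (1/v_{n,i} − 1/v_{c,n}) converges to p, so the GRBCM prediction variance 1/P_n converges to 1/p = σ_η², the true noise variance. This is the variance-consistency part of Proposition 3. -/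
open Filter Topology Finset

/-- Variance-consistency part of Proposition 3: the GRBCM aggregated precision
`P_n = 1/v_{+2,n} + Σ_{i=3}^{M_n} (1/2) log(v_c/v_i)(1/v_i − 1/v_c)` converges to the
true precision `p`, so the GRBCM prediction variance `1/P_n` converges to `1/p`. -/
theorem grbcm_variance_consistency
    (p σ0 a C c : ℝ) (hp : 0 < p)
    (hσ0 : 0 < σ0) (ha : 0 < a) (hC : 0 < C) (hc : 0 < c)
    (M : ℕ → ℕ) (hMpos : ∀ n, 0 < M n)
    (hM : Tendsto (fun n => (M n : ℝ)) atTop atTop)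
    (hnM : ∀ᶠ n : ℕ in atTop, c ≤ (n : ℝ) / (M n : ℝ) ^ 2)
    (r : ℕ → ℝ)
    (hr : ∀ᶠ n : ℕ in atTop, 0 < r n ∧ r n ≤ C * (M n : ℝ) / (n : ℝ))
    (v2 : ℕ → ℝ) (hv2pos : ∀ n, 0 < v2 n)
    (hv2 : Tendsto (fun n => 1 / v2 n) atTop (𝓝 p))
    (v : ℕ → ℕ → ℝ) (vc σ2 : ℕ → ℝ)
    (hσ2 : ∀ n, σ0 ≤ σ2 n)
    (hv : ∀ n, ∀ i ∈ Finset.Icc 3 (M n),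
      σ2 n < v n i ∧ v n i ≤ vc n ∧ vc n ≤ a * r n ^ 2 + σ2 n) :
    Tendsto (fun n => 1 / v2 n + ∑ i ∈ Finset.Icc 3 (M n),
      (1 / 2) * Real.log (vc n / v n i) * (1 / v n i - 1 / vc n)) atTop (𝓝 p) ∧
    Tendsto (fun n => 1 / (1 / v2 n + ∑ i ∈ Finset.Icc 3 (M n),
      (1 / 2) * Real.log (vc n / v n i) * (1 / v n i - 1 / vc n))) atTop (𝓝 (1 / p)) := by
  set S : ℕ → ℝ := fun n => ∑ i ∈ Finset.Icc 3 (M n),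
      (1 / 2) * Real.log (vc n / v n i) * (1 / v n i - 1 / vc n) with hS
  -- per-point positivity facts
  have key : ∀ n, ∀ i ∈ Finset.Icc 3 (M n),
      0 < v n i ∧ 0 < vc n ∧
      0 ≤ (1 / 2) * Real.log (vc n / v n i) * (1 / v n i - 1 / vc n) := by
    intro n i hi
    obtain ⟨h1, h2, h3⟩ := hv n i hi
    have hvpos : 0 < v n i := lt_of_le_of_lt (hσ0.le.trans (hσ2 n)) h1
    have hvcpos : 0 < vc n := hvpos.trans_le h2
    refine ⟨hvpos, hvcpos, ?_⟩
    have hlog : 0 ≤ Real.log (vc n / v n i) :=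
      Real.log_nonneg ((one_le_div hvpos).2 h2)
    have hd : 0 ≤ 1 / v n i - 1 / vc n := by
      have := one_div_le_one_div_of_le hvpos h2
      linarith
    positivity
  have hsum0 : Tendsto S atTop (𝓝 0) := by
    set K : ℝ := a ^ 2 * C ^ 4 / (2 * σ0 ^ 3 * c ^ 4) with hKdef
    have hg : Tendsto (fun n => K * (1 / (M n : ℝ) ^ 3)) atTop (𝓝 0) := by
      have h3 : Tendsto (fun n => ((M n : ℝ)) ^ 3) atTop atTop :=
        (tendsto_pow_atTop (by norm_num : 3 ≠ 0)).comp hM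
      have h4 := (tendsto_const_nhds : Tendsto (fun _ : ℕ => K) atTop (𝓝 K)).mul
        h3.inv_tendsto_atTop
      simpa [one_div] using h4
    apply squeeze_zero' ?_ ?_ hg
    · filter_upwards with n
      exact Finset.sum_nonneg fun i hi => (key n i hi).2.2
    · filter_upwards [hr, hnM] with n hrn hcn
      obtain ⟨hr0, hrle⟩ := hrn
      have hMn : (0:ℝ) < (M n : ℝ) := by exact_mod_cast hMpos n
      have hn0 : (0:ℝ) < (n:ℝ) := by
        by_contra hle
        push_neg at hle
        have : (n:ℝ) / (M n : ℝ) ^ 2 ≤ 0 :=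
          div_nonpos_of_nonpos_of_nonneg hle (by positivity)
        linarith [hc.trans_le hcn]
      have hnge : c * (M n : ℝ) ^ 2 ≤ (n : ℝ) := by
        have := (le_div_iff₀ (by positivity : (0:ℝ) < (M n : ℝ) ^ 2)).1 hcn
        linarith
      -- per-term bound
      have hterm : ∀ i ∈ Finset.Icc 3 (M n),
          (1 / 2) * Real.log (vc n / v n i) * (1 / v n i - 1 / vc n)
            ≤ a ^ 2 * r n ^ 4 / (2 * σ0 ^ 3) := by
        intro i hi
        obtain ⟨h1, h2, h3⟩ := hv n i hi
        obtain ⟨hvpos, hvcpos, _⟩ := key n i hi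
        have hσv : σ0 ≤ v n i := (hσ2 n).trans h1.le
        have hσvc : σ0 ≤ vc n := hσv.trans h2
        have hdiff : vc n - v n i ≤ a * r n ^ 2 := by linarith [hσ2 n]
        have hlognn : 0 ≤ Real.log (vc n / v n i) :=
          Real.log_nonneg ((one_le_div hvpos).2 h2)
        have hdnn : 0 ≤ 1 / v n i - 1 / vc n := by
          have := one_div_le_one_div_of_le hvpos h2
          linarith
        have hlog : Real.log (vc n / v n i) ≤ a * r n ^ 2 / σ0 := by
          have hls := Real.log_le_sub_one_of_pos (div_pos hvcpos hvpos)
          have heq : vc n / v n i - 1 = (vc n - v n i) / v n i := by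
            field_simp
          rw [heq] at hls
          exact hls.trans (div_le_div₀ (by positivity) hdiff hσ0 hσv)
        have hd2 : 1 / v n i - 1 / vc n ≤ a * r n ^ 2 / σ0 ^ 2 := by
          have heq : 1 / v n i - 1 / vc n = (vc n - v n i) / (v n i * vc n) := by
            field_simp
          rw [heq]
          exact div_le_div₀ (by positivity) hdiff (by positivity)
            (by nlinarith)
        have hrw : a ^ 2 * r n ^ 4 / (2 * σ0 ^ 3)
            = (1 / 2) * (a * r n ^ 2 / σ0) * (a * r n ^ 2 / σ0 ^ 2) := by
          field_simp
        rw [hrw]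
        exact mul_le_mul (mul_le_mul le_rfl hlog hlognn (by positivity))
          hd2 hdnn (by positivity)
      -- sum bound
      have hcard : (Finset.Icc 3 (M n)).card ≤ M n := by
        rw [Nat.card_Icc]; omega
      have hsumle : S n ≤ (M n : ℝ) * (a ^ 2 * r n ^ 4 / (2 * σ0 ^ 3)) := by
        calc S n ≤ (Finset.Icc 3 (M n)).card • (a ^ 2 * r n ^ 4 / (2 * σ0 ^ 3)) :=
              Finset.sum_le_card_nsmul _ _ _ hterm
          _ = ((Finset.Icc 3 (M n)).card : ℝ) * (a ^ 2 * r n ^ 4 / (2 * σ0 ^ 3)) := by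
              simp [nsmul_eq_mul]
          _ ≤ (M n : ℝ) * (a ^ 2 * r n ^ 4 / (2 * σ0 ^ 3)) := by
              apply mul_le_mul_of_nonneg_right (by exact_mod_cast hcard)
              positivity
      have hr4 : r n ^ 4 ≤ C ^ 4 / (c ^ 4 * (M n : ℝ) ^ 4) := by
        have h1 : r n ^ 4 ≤ C ^ 4 * (M n : ℝ) ^ 4 / (n : ℝ) ^ 4 := by
          calc r n ^ 4 ≤ (C * (M n : ℝ) / (n : ℝ)) ^ 4 :=
                pow_le_pow_left₀ hr0.le hrle 4
            _ = C ^ 4 * (M n : ℝ) ^ 4 / (n : ℝ) ^ 4 := by ring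
        refine h1.trans ?_
        rw [div_le_div_iff₀ (by positivity) (by positivity)]
        have hpow : (c * (M n : ℝ) ^ 2) ^ 4 ≤ (n : ℝ) ^ 4 :=
          pow_le_pow_left₀ (by positivity) hnge 4
        calc C ^ 4 * (M n : ℝ) ^ 4 * (c ^ 4 * (M n : ℝ) ^ 4)
            = C ^ 4 * (c * (M n : ℝ) ^ 2) ^ 4 := by ring
          _ ≤ C ^ 4 * (n : ℝ) ^ 4 :=
              mul_le_mul_of_nonneg_left hpow (by positivity)
      calc S n ≤ (M n : ℝ) * (a ^ 2 * r n ^ 4 / (2 * σ0 ^ 3)) := hsumle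
        _ ≤ (M n : ℝ) * (a ^ 2 * (C ^ 4 / (c ^ 4 * (M n : ℝ) ^ 4)) / (2 * σ0 ^ 3)) := by
            apply mul_le_mul_of_nonneg_left ?_ hMn.le
            apply div_le_div_of_nonneg_right ?_ (by positivity)
            exact mul_le_mul_of_nonneg_left hr4 (by positivity)
        _ = K * (1 / (M n : ℝ) ^ 3) := by
            rw [hKdef]; field_simp
  have hP : Tendsto (fun n => 1 / v2 n + S n) atTop (𝓝 p) := by
    simpa using hv2.add hsum0
  refine ⟨hP, ?_⟩
  have h2 := hP.inv₀ hp.ne'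
  rw [hS] at h2
  simp only [one_div] at h2 ⊢
  exact h2
end

section
/- Let σ₀ > 0, a > 0, C > 0, c > 0 be real constants. Let (M_n) be a sequence of positive integers with M_n → ∞ and n / M_n² ≥ c, and (r_n) with 0 < r_n ≤ C M_n / n. Suppose for each n and each 3 ≤ i ≤ M_n there are reals v_{n,i}, v_{c,n}, σ_n² with σ_n² ≥ σ₀ and σ_n² < v_{n,i} ≤ v_{c,n} ≤ a r_n² + σ_n², and reals m_{n,i} (means of the enhanced experts) and m_{c,n} (mean of the communication expert) such that δ_n := max_{3 ≤ i ≤ M_n} |(v_{c,n} / v_{n,i}) m_{n,i} − m_{c,n}| → 0. Then the GRBCM mean correction μ_{Δ,n} = Σ_{i=3}^{M_n} (1/2) log(v_{c,n}/v_{n,i}) · (m_{n,i} / v_{n,i} − m_{c,n} / v_{c,n}) converges to 0 as n → ∞. -/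
open Filter Topology Finset

/-- Eq. (zero2_GRBCM) in the proof of Proposition 3: the GRBCM mean correction
`μ_{Δ,n} = Σ_{i=3}^{M_n} (1/2) log(v_c/v_i) (m_i/v_i − m_c/v_c)` converges to 0, given
the variance bounds and `δ_n = max_i |(v_c/v_i) m_i − m_c| → 0`. -/
theorem grbcm_mean_correction_tendsto_zero
    (σ0 a C c : ℝ) (hσ0 : 0 < σ0) (ha : 0 < a) (hC : 0 < C) (hc : 0 < c)
    (M : ℕ → ℕ) (hMpos : ∀ n, 0 < M n)
    (hM : Tendsto (fun n => (M n : ℝ)) atTop atTop)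
    (hnM : ∀ᶠ n : ℕ in atTop, c ≤ (n : ℝ) / (M n : ℝ) ^ 2)
    (r : ℕ → ℝ)
    (hr : ∀ᶠ n : ℕ in atTop, 0 < r n ∧ r n ≤ C * (M n : ℝ) / (n : ℝ))
    (v : ℕ → ℕ → ℝ) (vc σ2 : ℕ → ℝ)
    (hσ2 : ∀ n, σ0 ≤ σ2 n)
    (hv : ∀ n, ∀ i ∈ Finset.Icc 3 (M n),
      σ2 n < v n i ∧ v n i ≤ vc n ∧ vc n ≤ a * r n ^ 2 + σ2 n)
    (m : ℕ → ℕ → ℝ) (mc : ℕ → ℝ)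
    (hδ : ∀ ε > (0 : ℝ), ∃ N : ℕ, ∀ n ≥ N, ∀ i ∈ Finset.Icc 3 (M n),
      |vc n / v n i * m n i - mc n| < ε) :
    Tendsto (fun n => ∑ i ∈ Finset.Icc 3 (M n),
      (1 / 2) * Real.log (vc n / v n i) * (m n i / v n i - mc n / vc n)) atTop (𝓝 0) := by
  rw [NormedAddCommGroup.tendsto_nhds_zero]
  intro ε hε
  set K := a * C ^ 2 / (2 * σ0 ^ 2 * c ^ 2) with hKdef
  have hK : 0 < K := by positivity
  obtain ⟨N, hN⟩ := hδ (ε / (2 * K)) (by positivity)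
  set ε' := ε / (2 * K) with hε'def
  have hε' : 0 < ε' := by positivity
  filter_upwards [hnM, hr, eventually_ge_atTop N] with n hn hrn hNn
  have hM1 : (1 : ℝ) ≤ (M n : ℝ) := by exact_mod_cast hMpos n
  rw [le_div_iff₀ (by positivity : (0:ℝ) < (M n : ℝ) ^ 2)] at hn
  have hnpos : (0 : ℝ) < (n : ℝ) := by nlinarith [mul_pos hc (by positivity : (0:ℝ) < (M n : ℝ) ^ 2)]
  have hMsq : (M n : ℝ) ^ 2 ≤ (n : ℝ) / c := by
    rw [le_div_iff₀ hc]
    linarith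
  -- per-term bound
  have hbound : ∀ i ∈ Finset.Icc 3 (M n),
      ‖(1 / 2) * Real.log (vc n / v n i) * (m n i / v n i - mc n / vc n)‖
        ≤ a * r n ^ 2 / (2 * σ0 ^ 2) * ε' := by
    intro i hi
    obtain ⟨h1, h2, h3⟩ := hv n i hi
    have hσ2n := hσ2 n
    have hvi : 0 < v n i := by linarith
    have hvc : 0 < vc n := by linarith
    have hσvi : σ0 ≤ v n i := by linarith
    have hσvc : σ0 ≤ vc n := by linarith
    have hlog0 : 0 ≤ Real.log (vc n / v n i) :=
      Real.log_nonneg ((one_le_div hvi).mpr h2)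
    have hlog : Real.log (vc n / v n i) ≤ a * r n ^ 2 / σ0 := by
      have hls := Real.log_le_sub_one_of_pos (show 0 < vc n / v n i by positivity)
      have h4 : vc n / v n i - 1 ≤ a * r n ^ 2 / σ0 := by
        rw [div_sub_one hvi.ne']
        exact div_le_div₀ (by positivity) (by linarith) hσ0 hσvi
      linarith
    have hnum := hN n hNn i hi
    have hdiff : |m n i / v n i - mc n / vc n| ≤ ε' / σ0 := by
      have heq : m n i / v n i - mc n / vc n
          = (vc n / v n i * m n i - mc n) / vc n := by
        field_simp
      rw [heq, abs_div, abs_of_pos hvc]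
      exact div_le_div₀ hε'.le hnum.le hσ0 hσvc
    rw [Real.norm_eq_abs, abs_mul, abs_mul, abs_of_nonneg hlog0,
      abs_of_nonneg (by norm_num : (0:ℝ) ≤ (1:ℝ)/2)]
    calc (1 / 2) * Real.log (vc n / v n i) * |m n i / v n i - mc n / vc n|
        ≤ (1 / 2) * (a * r n ^ 2 / σ0) * (ε' / σ0) := by
          have := mul_le_mul hlog hdiff (abs_nonneg _) (by positivity)
          nlinarith
      _ = a * r n ^ 2 / (2 * σ0 ^ 2) * ε' := by ring
  have hcard : ((Finset.Icc 3 (M n)).card : ℝ) ≤ (M n : ℝ) := by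
    rw [Nat.card_Icc]
    exact_mod_cast (by omega : M n + 1 - 3 ≤ M n)
  have key : (M n : ℝ) * r n ^ 2 ≤ C ^ 2 / c ^ 2 := by
    have h1 : r n ^ 2 ≤ (C * (M n : ℝ) / (n : ℝ)) ^ 2 :=
      pow_le_pow_left₀ hrn.1.le hrn.2 2
    have hM3 : (M n : ℝ) ^ 3 ≤ (n : ℝ) ^ 2 / c ^ 2 := by
      have h4 : (M n : ℝ) ^ 2 * (M n : ℝ) ^ 2 ≤ ((n : ℝ) / c) * ((n : ℝ) / c) :=
        mul_le_mul hMsq hMsq (by positivity) (by positivity)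
      have h5 : (M n : ℝ) ^ 3 ≤ (M n : ℝ) ^ 2 * (M n : ℝ) ^ 2 := by nlinarith
      calc (M n : ℝ) ^ 3 ≤ ((n : ℝ) / c) * ((n : ℝ) / c) := le_trans h5 h4
        _ = (n : ℝ) ^ 2 / c ^ 2 := by ring
    calc (M n : ℝ) * r n ^ 2 ≤ (M n : ℝ) * (C * (M n : ℝ) / (n : ℝ)) ^ 2 :=
          mul_le_mul_of_nonneg_left h1 (by positivity)
      _ = C ^ 2 * ((M n : ℝ) ^ 3 / (n : ℝ) ^ 2) := by ring
      _ ≤ C ^ 2 * (((n : ℝ) ^ 2 / c ^ 2) / (n : ℝ) ^ 2) := by gcongr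
      _ = C ^ 2 / c ^ 2 := by field_simp
  calc ‖∑ i ∈ Finset.Icc 3 (M n),
        (1 / 2) * Real.log (vc n / v n i) * (m n i / v n i - mc n / vc n)‖
      ≤ ∑ i ∈ Finset.Icc 3 (M n),
        ‖(1 / 2) * Real.log (vc n / v n i) * (m n i / v n i - mc n / vc n)‖ :=
        norm_sum_le _ _
    _ ≤ ((Finset.Icc 3 (M n)).card : ℝ) * (a * r n ^ 2 / (2 * σ0 ^ 2) * ε') := by
        rw [← nsmul_eq_mul]
        exact Finset.sum_le_card_nsmul _ _ _ hbound
    _ ≤ (M n : ℝ) * (a * r n ^ 2 / (2 * σ0 ^ 2) * ε') :=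
        mul_le_mul_of_nonneg_right hcard (by positivity)
    _ = ((M n : ℝ) * r n ^ 2) * (a * ε' / (2 * σ0 ^ 2)) := by ring
    _ ≤ (C ^ 2 / c ^ 2) * (a * ε' / (2 * σ0 ^ 2)) :=
        mul_le_mul_of_nonneg_right key (by positivity)
    _ = K * ε' := by rw [hKdef]; ring
    _ = ε / 2 := by rw [hε'def]; field_simp [hK.ne']
    _ < ε := by linarith
end

section
/- Let p > 0, μ ∈ ℝ, σ₀ > 0, a > 0, C > 0, c > 0 be real constants. Let (M_n) be a sequence of positive integers with M_n → ∞ and n / M_n² ≥ c, and (r_n) with 0 < r_n ≤ C M_n / n. Suppose for each n: (i) v_{+2,n} > 0 with 1/v_{+2,n} → p and m_{+2,n} → μ; (ii) for each 3 ≤ i ≤ M_n, reals v_{n,i}, v_{c,n}, σ_n², m_{n,i}, m_{c,n} with σ_n² ≥ σ₀, σ_n² < v_{n,i} ≤ v_{c,n} ≤ a r_n² + σ_n², and max_{3≤i≤M_n} |(v_{c,n}/v_{n,i}) m_{n,i} − m_{c,n}| → 0. Then, with P_n = 1/v_{+2,n} + Σ_{i=3}^{M_n} (1/2) log(v_{c,n}/v_{n,i})(1/v_{n,i}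 − 1/v_{c,n}) and μ_{Δ,n} = Σ_{i=3}^{M_n} (1/2) log(v_{c,n}/v_{n,i})(m_{n,i}/v_{n,i} − m_{c,n}/v_{c,n}), the GRBCM aggregated mean μ_n = P_n^{-1} (μ_{Δ,n} + m_{+2,n} / v_{+2,n}) converges to μ. This is the mean-consistency part of Proposition 3: GRBCM's prediction mean converges to the true underlying function value. -/
open Filter Topology Finset

/-- Auxiliary: bound of the absolute value of a sum by card times a uniform bound. -/
lemma grbcm_abs_sum_le (s : Finset ℕ) (f : ℕ → ℝ) (b : ℝ) (h : ∀ i ∈ s, |f i| ≤ b) :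
    |∑ i ∈ s, f i| ≤ s.card * b := by
  calc |∑ i ∈ s, f i| ≤ ∑ i ∈ s, |f i| := Finset.abs_sum_le_sum_abs _ _
    _ ≤ s.card * b := by simpa [nsmul_eq_mul] using Finset.sum_le_card_nsmul s _ b h

set_option maxHeartbeats 1000000 in
/-- Mean-consistency part of Proposition 3: the GRBCM aggregated mean
`μ_n = P_n⁻¹ (μ_{Δ,n} + m_{+2,n}/v_{+2,n})` converges to the true mean `μ`, where
`P_n = 1/v_{+2,n} + Σ_{i=3}^{M_n} (1/2) log(v_c/v_i)(1/v_i − 1/v_c)` and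
`μ_{Δ,n} = Σ_{i=3}^{M_n} (1/2) log(v_c/v_i)(m_i/v_i − m_c/v_c)`. -/
theorem grbcm_mean_consistency
    (p μ σ0 a C c : ℝ) (hp : 0 < p)
    (hσ0 : 0 < σ0) (ha : 0 < a) (hC : 0 < C) (hc : 0 < c)
    (M : ℕ → ℕ) (hMpos : ∀ n, 0 < M n)
    (hM : Tendsto (fun n => (M n : ℝ)) atTop atTop)
    (hnM : ∀ᶠ n : ℕ in atTop, c ≤ (n : ℝ) / (M n : ℝ) ^ 2)
    (r : ℕ → ℝ)
    (hr : ∀ᶠ n : ℕ in atTop, 0 < r n ∧ r n ≤ C * (M n : ℝ) / (n : ℝ))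
    (v2 : ℕ → ℝ) (hv2pos : ∀ n, 0 < v2 n)
    (hv2 : Tendsto (fun n => 1 / v2 n) atTop (𝓝 p))
    (m2 : ℕ → ℝ) (hm2 : Tendsto m2 atTop (𝓝 μ))
    (v : ℕ → ℕ → ℝ) (vc σ2 : ℕ → ℝ)
    (hσ2 : ∀ n, σ0 ≤ σ2 n)
    (hv : ∀ n, ∀ i ∈ Finset.Icc 3 (M n),
      σ2 n < v n i ∧ v n i ≤ vc n ∧ vc n ≤ a * r n ^ 2 + σ2 n)
    (m : ℕ → ℕ → ℝ) (mc : ℕ → ℝ)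
    (hδ : ∀ ε > (0 : ℝ), ∃ N : ℕ, ∀ n ≥ N, ∀ i ∈ Finset.Icc 3 (M n),
      |vc n / v n i * m n i - mc n| < ε) :
    Tendsto (fun n =>
      ((∑ i ∈ Finset.Icc 3 (M n),
          (1 / 2) * Real.log (vc n / v n i) * (m n i / v n i - mc n / vc n)) +
        m2 n / v2 n) /
      (1 / v2 n + ∑ i ∈ Finset.Icc 3 (M n),
          (1 / 2) * Real.log (vc n / v n i) * (1 / v n i - 1 / vc n)))
      atTop (𝓝 μ) := by
  have hinv : Tendsto (fun n => 1/(M n : ℝ)) atTop (𝓝 0) := by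
    have h' : Tendsto (fun n => ((M n : ℝ))⁻¹) atTop (𝓝 0) := hM.inv_tendsto_atTop
    simpa [one_div] using h'
  obtain ⟨N, hN⟩ := hδ 1 one_pos
  have hδ1 : ∀ᶠ n : ℕ in atTop, ∀ i ∈ Finset.Icc 3 (M n),
      |vc n / v n i * m n i - mc n| < 1 := eventually_atTop.2 ⟨N, hN⟩
  have hfacts : ∀ᶠ n : ℕ in atTop,
      0 < r n ∧ r n ≤ C / (c * (M n : ℝ)) ∧
      (∀ i ∈ Finset.Icc 3 (M n), |vc n / v n i * m n i - mc n| < 1) := by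
    filter_upwards [hnM, hr, hδ1] with n h1 h2 h3
    have hM1 : (1 : ℝ) ≤ (M n : ℝ) := by exact_mod_cast hMpos n
    have hn0 : c * (M n : ℝ)^2 ≤ (n : ℝ) := by
      have := (le_div_iff₀ (by positivity : (0:ℝ) < (M n : ℝ)^2)).1 h1
      linarith
    have hnpos : (0 : ℝ) < (n : ℝ) := lt_of_lt_of_le (by positivity) hn0
    refine ⟨h2.1, ?_, h3⟩
    have : C * (M n : ℝ) / (n : ℝ) ≤ C / (c * (M n : ℝ)) := by
      rw [div_le_div_iff₀ hnpos (by positivity)]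
      nlinarith
    exact h2.2.trans this
  have hbounds : ∀ᶠ n : ℕ in atTop,
      (0 ≤ ∑ i ∈ Finset.Icc 3 (M n),
          (1 / 2) * Real.log (vc n / v n i) * (1 / v n i - 1 / vc n)) ∧
      ((∑ i ∈ Finset.Icc 3 (M n),
          (1 / 2) * Real.log (vc n / v n i) * (1 / v n i - 1 / vc n))
        ≤ (a^2 * C^4 / (2 * σ0^3 * c^4)) * (1 / (M n : ℝ))) ∧
      (|∑ i ∈ Finset.Icc 3 (M n),
          (1 / 2) * Real.log (vc n / v n i) * (m n i / v n i - mc n / vc n)|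
        ≤ (a * C^2 / (2 * σ0^2 * c^2)) * (1 / (M n : ℝ))) := by
    filter_upwards [hfacts] with n hn
    obtain ⟨hr0, hrle, hmδ⟩ := hn
    have hM1 : (1 : ℝ) ≤ (M n : ℝ) := by exact_mod_cast hMpos n
    have hMr0 : (0 : ℝ) < (M n : ℝ) := by linarith
    have hσn : 0 < σ2 n := lt_of_lt_of_le hσ0 (hσ2 n)
    have hrc : r n * (c * (M n : ℝ)) ≤ C := by
      have h := hrle
      rwa [le_div_iff₀ (by positivity)] at h
    -- u := a * r n ^ 2 and its bound
    set u : ℝ := a * r n ^ 2 with hu_def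
    have hu0 : 0 < u := by positivity
    have hu : u * (c^2 * (M n : ℝ)^2) ≤ a * C^2 := by
      have h2 : (r n * (c * (M n : ℝ)))^2 ≤ C^2 :=
        pow_le_pow_left₀ (by positivity) hrc 2
      calc u * (c^2 * (M n : ℝ)^2) = a * (r n * (c * (M n : ℝ)))^2 := by ring
        _ ≤ a * C^2 := by nlinarith
    -- per-index bounds for the two summands
    have key : ∀ i ∈ Finset.Icc 3 (M n),
        (0 ≤ (1 / 2) * Real.log (vc n / v n i) * (1 / v n i - 1 / vc n)) ∧
        ((1 / 2) * Real.log (vc n / v n i) * (1 / v n i - 1 / vc n) ≤ u^2 / (2 * σ0^3)) ∧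
        (|(1 / 2) * Real.log (vc n / v n i) * (m n i / v n i - mc n / vc n)|
          ≤ u / (2 * σ0^2)) := by
      intro i hi
      obtain ⟨h1, h2, h3⟩ := hv n i hi
      have hσvi : σ0 ≤ v n i := (hσ2 n).trans h1.le
      have hvi : 0 < v n i := lt_of_lt_of_le hσ0 hσvi
      have hvc : 0 < vc n := lt_of_lt_of_le hvi h2
      have hσvc : σ0 ≤ vc n := hσvi.trans h2
      have hdiff : vc n - v n i ≤ u := by
        rw [hu_def]; linarith
      have hlog0 : 0 ≤ Real.log (vc n / v n i) :=
        Real.log_nonneg ((one_le_div hvi).2 h2)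
      have hlogle : Real.log (vc n / v n i) ≤ u / σ0 := by
        have hl1 : Real.log (vc n / v n i) ≤ vc n / v n i - 1 :=
          Real.log_le_sub_one_of_pos (div_pos hvc hvi)
        have hl2 : vc n / v n i - 1 = (vc n - v n i) / v n i := by
          field_simp
        have hl3 : (vc n - v n i) / v n i ≤ u / σ0 :=
          div_le_div₀ (le_of_lt hu0) hdiff hσ0 hσvi
        calc Real.log (vc n / v n i) ≤ vc n / v n i - 1 := hl1
          _ = (vc n - v n i) / v n i := hl2
          _ ≤ u / σ0 := hl3
      refine ⟨?_, ?_, ?_⟩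
      · have : 1 / vc n ≤ 1 / v n i := one_div_le_one_div_of_le hvi h2
        have h0 : 0 ≤ 1 / v n i - 1 / vc n := by linarith
        positivity
      · have hfr : 1 / v n i - 1 / vc n ≤ u / σ0^2 := by
          have he : 1 / v n i - 1 / vc n = (vc n - v n i) / (v n i * vc n) := by
            field_simp
            try ring
          have hm2' : σ0^2 ≤ v n i * vc n := by nlinarith
          rw [he]
          exact div_le_div₀ (le_of_lt hu0) hdiff (by positivity) hm2'
        have h0fr : 0 ≤ 1 / v n i - 1 / vc n := by
          have : 1 / vc n ≤ 1 / v n i := one_div_le_one_div_of_le hvi h2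
          linarith
        calc (1 / 2) * Real.log (vc n / v n i) * (1 / v n i - 1 / vc n)
            ≤ (1 / 2) * (u / σ0) * (u / σ0^2) := by
              apply mul_le_mul _ hfr h0fr (by positivity)
              apply mul_le_mul_of_nonneg_left hlogle (by norm_num)
          _ = u^2 / (2 * σ0^3) := by field_simp
      · have hδi := le_of_lt (hmδ i hi)
        have he : m n i / v n i - mc n / vc n
            = (vc n / v n i * m n i - mc n) / vc n := by
          field_simp
        have habs : |(1 / 2) * Real.log (vc n / v n i) *
            ((vc n / v n i * m n i - mc n) / vc n)|
            = (1/2) * Real.log (vc n / v n i) *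
              (|vc n / v n i * m n i - mc n| / vc n) := by
          rw [abs_mul, abs_mul, abs_of_nonneg hlog0,
            abs_div (vc n / v n i * m n i - mc n), abs_of_pos hvc]
          norm_num
        rw [he, habs]
        calc (1/2) * Real.log (vc n / v n i) * (|vc n / v n i * m n i - mc n| / vc n)
            ≤ (1/2) * (u / σ0) * (1 / σ0) := by
              apply mul_le_mul
              · exact mul_le_mul_of_nonneg_left hlogle (by norm_num)
              · apply div_le_div₀ (by positivity) hδi hσ0 hσvc
              · positivity
              · positivity
          _ = u / (2 * σ0^2) := by ring
    -- now bound the sums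
    have hcard : ((Finset.Icc 3 (M n)).card : ℝ) ≤ (M n : ℝ) := by
      rw [Nat.card_Icc]
      have h : M n + 1 - 3 ≤ M n := by omega
      exact_mod_cast h
    refine ⟨?_, ?_, ?_⟩
    · exact Finset.sum_nonneg fun i hi => (key i hi).1
    · have hs1 : (∑ i ∈ Finset.Icc 3 (M n),
          (1 / 2) * Real.log (vc n / v n i) * (1 / v n i - 1 / vc n))
          ≤ (Finset.Icc 3 (M n)).card * (u^2 / (2 * σ0^3)) := by
        simpa [nsmul_eq_mul] using
          Finset.sum_le_card_nsmul (Finset.Icc 3 (M n)) _ _ fun i hi => (key i hi).2.1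
      have hs2 : ((Finset.Icc 3 (M n)).card : ℝ) * (u^2 / (2 * σ0^3))
          ≤ (M n : ℝ) * (u^2 / (2 * σ0^3)) :=
        mul_le_mul_of_nonneg_right hcard (by positivity)
      have hs3 : (M n : ℝ) * (u^2 / (2 * σ0^3))
          ≤ (a^2 * C^4 / (2 * σ0^3 * c^4)) * (1 / (M n : ℝ)) := by
        rw [mul_one_div, le_div_iff₀ hMr0]
        have h1 : (M n:ℝ) * (u^2/(2*σ0^3)) * (M n:ℝ)
            = ((M n:ℝ)^2 * u^2) / (2*σ0^3) := by ring
        rw [h1, div_le_div_iff₀ (by positivity) (by positivity)]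
        have hu2 : (u * (c^2 * (M n : ℝ)^2))^2 ≤ (a * C^2)^2 :=
          pow_le_pow_left₀ (by positivity) hu 2
        have hM2 : (1:ℝ) ≤ (M n:ℝ)^2 := by nlinarith
        have hM4 : (M n:ℝ)^2 ≤ (M n:ℝ)^4 := by
          nlinarith [mul_le_mul_of_nonneg_left hM2 (sq_nonneg (M n:ℝ))]
        have h2 : (M n:ℝ)^2 * u^2 * c^4 ≤ a^2 * C^2^2 := by
          have hu2' : u^2 * c^4 * (M n:ℝ)^4 ≤ a^2 * C^2^2 := by
            calc u^2 * c^4 * (M n:ℝ)^4 = (u * (c^2 * (M n:ℝ)^2))^2 := by ring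
              _ ≤ (a * C^2)^2 := hu2
              _ = a^2 * C^2^2 := by ring
          linarith [mul_le_mul_of_nonneg_left hM4
            (by positivity : (0:ℝ) ≤ u^2 * c^4)]
        calc (M n:ℝ)^2 * u^2 * (2*σ0^3*c^4)
            = ((M n:ℝ)^2 * u^2 * c^4) * (2*σ0^3) := by ring
          _ ≤ (a^2 * C^2^2) * (2*σ0^3) :=
              mul_le_mul_of_nonneg_right h2 (by positivity)
          _ = a^2 * C^4 * (2*σ0^3) := by ring
      linarith
    · have hs1 : |∑ i ∈ Finset.Icc 3 (M n),
          (1 / 2) * Real.log (vc n / v n i) * (m n i / v n i - mc n / vc n)|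
          ≤ (Finset.Icc 3 (M n)).card * (u / (2 * σ0^2)) :=
        grbcm_abs_sum_le _ _ _ fun i hi => (key i hi).2.2
      have hs2 : ((Finset.Icc 3 (M n)).card : ℝ) * (u / (2 * σ0^2))
          ≤ (M n : ℝ) * (u / (2 * σ0^2)) :=
        mul_le_mul_of_nonneg_right hcard (by positivity)
      have hs3 : (M n : ℝ) * (u / (2 * σ0^2))
          ≤ (a * C^2 / (2 * σ0^2 * c^2)) * (1 / (M n : ℝ)) := by
        rw [mul_one_div, le_div_iff₀ hMr0]
        have h1 : (M n:ℝ) * (u/(2*σ0^2)) * (M n:ℝ)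
            = ((M n:ℝ)^2 * u) / (2*σ0^2) := by ring
        rw [h1, div_le_div_iff₀ (by positivity) (by positivity)]
        have h2 : (M n:ℝ)^2 * u * c^2 ≤ a * C^2 := by
          calc (M n:ℝ)^2 * u * c^2 = u * (c^2 * (M n:ℝ)^2) := by ring
            _ ≤ a * C^2 := hu
        calc (M n:ℝ)^2 * u * (2*σ0^2*c^2)
            = ((M n:ℝ)^2 * u * c^2) * (2*σ0^2) := by ring
          _ ≤ (a * C^2) * (2*σ0^2) :=
              mul_le_mul_of_nonneg_right h2 (by positivity)
          _ = a * C^2 * (2*σ0^2) := by ring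
      linarith
  -- convergence of the two sums
  have hS : Tendsto (fun n => ∑ i ∈ Finset.Icc 3 (M n),
      (1 / 2) * Real.log (vc n / v n i) * (1 / v n i - 1 / vc n)) atTop (𝓝 0) := by
    apply squeeze_zero' (hbounds.mono fun n h => h.1) (hbounds.mono fun n h => h.2.1)
    simpa using hinv.const_mul (a^2 * C^4 / (2 * σ0^3 * c^4))
  have hT : Tendsto (fun n => ∑ i ∈ Finset.Icc 3 (M n),
      (1 / 2) * Real.log (vc n / v n i) * (m n i / v n i - mc n / vc n)) atTop (𝓝 0) := by
    apply squeeze_zero_norm' (hbounds.mono fun n h => h.2.2)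
    simpa using hinv.const_mul (a * C^2 / (2 * σ0^2 * c^2))
  -- assemble
  have hm2v2 : Tendsto (fun n => m2 n / v2 n) atTop (𝓝 (μ * p)) := by
    simpa [mul_one_div, div_eq_mul_inv] using hm2.mul hv2
  have hnum : Tendsto (fun n =>
      (∑ i ∈ Finset.Icc 3 (M n),
        (1 / 2) * Real.log (vc n / v n i) * (m n i / v n i - mc n / vc n)) + m2 n / v2 n)
      atTop (𝓝 (0 + μ * p)) := hT.add hm2v2
  have hden : Tendsto (fun n =>
      1 / v2 n + ∑ i ∈ Finset.Icc 3 (M n),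
        (1 / 2) * Real.log (vc n / v n i) * (1 / v n i - 1 / vc n))
      atTop (𝓝 (p + 0)) := hv2.add hS
  have hfinal := hnum.div hden (by simpa using hp.ne')
  have : (0 + μ * p) / (p + 0) = μ := by field_simp; ring
  rwa [this] at hfinal
end
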